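/- arXiv:2002.07012 — 3 statements merged into one kernel-verified Lean document; each statement's English description precedes it below -/
import Mathlib

section
/- Consider the walk-based LP relaxation on a graph G = (V, E) with |V| = n ≥ 1 and T + 1 ≤ n timesteps, with variables x_v^t ∈ [0,1] for v ∈ V, t ∈ {0,...,T}, constraints: (i) ∑_{v∈V} x_v^t ≤ 1 for all t; (ii) ∑_{t=0}^T x_v^t ≤ 1 for all v; (iii) ∑_v x_v^{t+1} ≤ ∑_v x_v^t for all t < T; (iv) x_v^t + ∑_{w: vw∉E, w≠v} x_w^{t+1} ≤ 1 for all v and t < T; (v) x_v^t + ∑_{τ=t+2}^T x_w^τ ≤ 1 for all edges vw and t ≤ T-2; and objective ∑_{t=1}^T ∑_v x_v^t. Then the assignment x_v^t = 1/n for all v, t is feasible and attains objective value T. -/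
/-! Every left-hand side is a sum of at most `n` copies of `1 / n`: the time windows have at most
`T + 1 ≤ n` steps, and a vertex is not among its own non-neighbours. -/

open Finset

section UniformWeights

variable {ι : Type*}

lemma sum_one_div_le_one {s : Finset ι} {n : ℕ} (h : #s ≤ n) : ∑ _ ∈ s, (1 / n : ℝ) ≤ 1 := by
  rw [sum_const, nsmul_eq_mul, mul_one_div]
  exact div_le_one_of_le₀ (by exact_mod_cast h) n.cast_nonneg

lemma one_div_add_sum_one_div_le_one {s : Finset ι} {n : ℕ} (h : #s < n) :
    (1 / n : ℝ) + ∑ _ ∈ s, (1 / n : ℝ) ≤ 1 := by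
  rw [sum_const, nsmul_eq_mul, mul_one_div, ← add_div, add_comm]
  exact div_le_one_of_le₀ (by exact_mod_cast h) n.cast_nonneg

lemma sum_univ_one_div_card [Fintype ι] [Nonempty ι] :
    ∑ _ : ι, (1 / Fintype.card ι : ℝ) = 1 := by
  rw [sum_const, card_univ, nsmul_eq_mul, mul_one_div, div_self]
  exact_mod_cast Fintype.card_ne_zero

end UniformWeights

theorem stmt6_general {V : Type*} [Fintype V] [DecidableEq V] (G : SimpleGraph V)
    [DecidableRel G.Adj] (T : ℕ)
    (hT : T + 1 ≤ Fintype.card V)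
    (x : V → ℕ → ℝ) (hx : x = fun _ _ => 1 / (Fintype.card V : ℝ)) :
    (∀ v t, 0 ≤ x v t ∧ x v t ≤ 1) ∧
    (∀ t, t ≤ T → ∑ v, x v t ≤ 1) ∧
    (∀ v, ∑ t ∈ Finset.range (T + 1), x v t ≤ 1) ∧
    (∀ t, t < T → ∑ v, x v (t + 1) ≤ ∑ v, x v t) ∧
    (∀ v t, t < T →
      x v t + ∑ w ∈ Finset.univ.filter (fun w => ¬ G.Adj v w ∧ w ≠ v), x w (t + 1) ≤ 1) ∧
    (∀ v w, G.Adj v w → ∀ t, t + 2 ≤ T →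
      x v t + ∑ τ ∈ Finset.Icc (t + 2) T, x w τ ≤ 1) ∧
    (∑ t ∈ Finset.Icc 1 T, ∑ v, x v t = T) := by
  subst hx
  have : Nonempty V := Fintype.card_pos_iff.mp (by omega)
  refine ⟨fun _ _ => ⟨by positivity, by simpa using Nat.cast_inv_le_one _⟩,
    fun _ _ => sum_one_div_le_one card_univ.le,
    fun _ => sum_one_div_le_one ((card_range _).trans_le hT),
    fun _ _ => le_rfl,
    fun v _ _ => one_div_add_sum_one_div_le_one (card_lt_univ_of_notMem (x := v) (by simp)),
    fun _ _ _ t ht => one_div_add_sum_one_div_le_one (by rw [Nat.card_Icc]; omega), ?_⟩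
  rw [sum_congr rfl fun _ _ => sum_univ_one_div_card, sum_const, Nat.card_Icc, nsmul_one,
    Nat.add_sub_cancel]

/-- The uniform assignment `x_v^t = 1/n` is feasible for the walk-based LP relaxation
with `T + 1 ≤ n` timesteps and attains objective value `T`. -/
theorem stmt6 {V : Type*} [Fintype V] [DecidableEq V] (G : SimpleGraph V)
    [DecidableRel G.Adj] (hconn : G.Connected) (T : ℕ)
    (hT : T + 1 ≤ Fintype.card V)
    (x : V → ℕ → ℝ) (hx : x = fun _ _ => 1 / (Fintype.card V : ℝ)) :
    (∀ v t, 0 ≤ x v t ∧ x v t ≤ 1) ∧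
    (∀ t, t ≤ T → ∑ v, x v t ≤ 1) ∧
    (∀ v, ∑ t ∈ Finset.range (T + 1), x v t ≤ 1) ∧
    (∀ t, t < T → ∑ v, x v (t + 1) ≤ ∑ v, x v t) ∧
    (∀ v t, t < T →
      x v t + ∑ w ∈ Finset.univ.filter (fun w => ¬ G.Adj v w ∧ w ≠ v), x w (t + 1) ≤ 1) ∧
    (∀ v w, G.Adj v w → ∀ t, t + 2 ≤ T →
      x v t + ∑ τ ∈ Finset.Icc (t + 2) T, x w τ ≤ 1) ∧
    (∑ t ∈ Finset.Icc 1 T, ∑ v, x v t = T) :=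
  stmt6_general G T hT x hx
end

section
/- Let ℓ ≥ 3 and let G be the graph with vertices v_L, v_R, m_1, ..., m_ℓ, v' where each m_i is adjacent to v_L and v_R and v' is adjacent only to v_R. Form G* by adding a vertex s adjacent to all vertices of G. Suppose x : E(G*) → [0,1] satisfies: (a) ∑_{v ∈ V(G)} x_{sv} = 2; and (b) for every edge e ∈ E(G), 2 x_e ≤ ∑_{f ∈ E(G*), f adjacent to e} x_f ≤ 2. Then ∑_{e ∈ E(G)} x_e ≤ 4 − 1/ℓ. -/
/-! For an edge `m_i v` of `G` with `v ∈ {v_L, v_R}`, the edges of `G*` adjacent to it are the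
other edges at `m_i` and at `v`, so the upper half of (b) reads
`load m_i + load v - 2 x(m_i v) ≤ 2`, where `load w` is the total weight of the edges at `w`.
Adding the two inequalities for `v = v_L` and `v = v_R` cancels `x(m_i v_L)` and `x(m_i v_R)`:
`2 x(s m_i) + x(s v_L) + x(s v_R) + ∑_{e ∈ E(G)} x_e ≤ 4`. Summing over `i` and substituting
`∑_i x(s m_i) = 2 - x(s v_L) - x(s v_R) - x(s v')` from (a) gives
`ℓ ∑_{e ∈ E(G)} x_e ≤ 4ℓ - 4 + 2 x(s v') - (ℓ - 2) (x(s v_L) + x(s v_R)) ≤ 4ℓ - 2`. -/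

/-- The apex augmentation `G*`: a new vertex `none` adjacent to every original vertex. -/
def apexGraph {V : Type*} (G : SimpleGraph V) : SimpleGraph (Option V) :=
  SimpleGraph.fromRel (fun a b =>
    a = none ∨ ∃ u v : V, a = some u ∧ b = some v ∧ G.Adj u v)

/-- The graph with hubs `v_L = inr 0`, `v_R = inr 1`, pendant `v' = inr 2`, and
midpoints `m_i = inl i` (each adjacent to both hubs); `v'` is adjacent only to `v_R`. -/
def pGraph (ℓ : ℕ) : SimpleGraph (Fin ℓ ⊕ Fin 3) :=
  SimpleGraph.fromRel (fun a b =>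
    (∃ i : Fin ℓ, a = Sum.inl i ∧ (b = Sum.inr 0 ∨ b = Sum.inr 1)) ∨
    (a = Sum.inr 1 ∧ b = Sum.inr 2))

open Finset Sum SimpleGraph

namespace SimpleGraph

variable {W : Type*} [Fintype W] (H : SimpleGraph W) [DecidableRel H.Adj]

section

variable [DecidableEq W]

theorem incidenceFinset_eq_map_neighborFinset (v : W) :
    H.incidenceFinset v = (H.neighborFinset v).map (Sym2.mkEmbedding v) := by
  ext e
  induction e using Sym2.inductionOn with
  | hf a b =>
    simp only [mem_incidenceFinset, incidenceSet, Set.mem_ofPred_eq, mem_edgeSet, mem_map,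
      mem_neighborFinset, Sym2.mkEmbedding_apply, Sym2.mem_iff]
    constructor
    · rintro ⟨h, rfl | rfl⟩
      · exact ⟨b, h, rfl⟩
      · exact ⟨a, h.symm, Sym2.eq_swap⟩
    · rintro ⟨w, h, hw⟩
      rcases Sym2.eq_iff.1 hw with ⟨rfl, rfl⟩ | ⟨rfl, rfl⟩
      · exact ⟨h, Or.inl rfl⟩
      · exact ⟨h.symm, Or.inr rfl⟩

theorem sum_incidenceFinset (x : Sym2 W → ℝ) (v : W) :
    ∑ f ∈ H.incidenceFinset v, x f = ∑ w ∈ H.neighborFinset v, x s(v, w) := by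
  rw [incidenceFinset_eq_map_neighborFinset, sum_map]
  rfl

theorem filter_adjacent_edgeFinset_eq (u v : W) :
    H.edgeFinset.filter (fun f => f ≠ s(u, v) ∧ ∃ z, z ∈ f ∧ z ∈ s(u, v)) =
      (H.incidenceFinset u ∪ H.incidenceFinset v).erase s(u, v) := by
  ext f
  simp only [mem_filter, mem_erase, mem_union, mem_incidenceFinset, incidenceSet,
    Set.mem_ofPred_eq, mem_edgeFinset, Sym2.mem_iff]
  grind

theorem sum_filter_adjacent_edgeFinset {u v : W} (huv : H.Adj u v) (x : Sym2 W → ℝ) :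
    ∑ f ∈ H.edgeFinset.filter (fun f => f ≠ s(u, v) ∧ ∃ z, z ∈ f ∧ z ∈ s(u, v)), x f =
      ∑ w ∈ H.neighborFinset u, x s(u, w) + ∑ w ∈ H.neighborFinset v, x s(v, w)
        - 2 * x s(u, v) := by
  have hinter : H.incidenceFinset u ∩ H.incidenceFinset v = {s(u, v)} := by
    rw [← coe_inj]; push_cast; exact H.incidenceSet_inter_incidenceSet_of_adj huv
  have hmem : s(u, v) ∈ H.incidenceFinset u ∪ H.incidenceFinset v := by
    simp [huv]
  rw [filter_adjacent_edgeFinset_eq H u v, sum_erase_eq_sub hmem,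
    ← sum_incidenceFinset, ← sum_incidenceFinset, ← sum_union_inter, hinter, sum_singleton]
  ring

end

theorem sum_edgeFinset_eq_add_of_forall_mem {a b : W} (hab : a ≠ b) (hnadj : ¬H.Adj a b)
    (hcover : ∀ e ∈ H.edgeSet, a ∈ e ∨ b ∈ e) (y : Sym2 W → ℝ) :
    ∑ e ∈ H.edgeFinset, y e =
      ∑ w ∈ H.neighborFinset a, y s(a, w) + ∑ w ∈ H.neighborFinset b, y s(b, w) := by
  classical
  have hedge : H.edgeFinset = H.incidenceFinset a ∪ H.incidenceFinset b := by
    ext e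
    simp only [mem_union, mem_incidenceFinset, incidenceSet, Set.mem_ofPred_eq, mem_edgeFinset]
    have := hcover e
    tauto
  have hdisj : Disjoint (H.incidenceFinset a) (H.incidenceFinset b) := by
    rw [← disjoint_coe]; push_cast
    exact Set.disjoint_iff_inter_eq_empty.2 (H.incidenceSet_inter_incidenceSet_of_not_adj hnadj hab)
  rw [hedge, sum_union hdisj, sum_incidenceFinset, sum_incidenceFinset]

end SimpleGraph

section Apex

variable {V : Type*} (G : SimpleGraph V)

theorem apexGraph_adj_none_some (v : V) : (apexGraph G).Adj none (some v) := by
  simp [apexGraph]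

theorem apexGraph_adj_some_some {u v : V} : (apexGraph G).Adj (some u) (some v) ↔ G.Adj u v := by
  simp only [apexGraph, fromRel_adj, ne_eq, Option.some.injEq, reduceCtorEq, false_or,
    exists_and_left, exists_eq_left']
  exact ⟨fun ⟨_, h⟩ => h.elim id .symm, fun h => ⟨h.ne, .inl h⟩⟩

open scoped Classical

variable [Fintype V] [DecidableEq V] [DecidableRel G.Adj]

theorem apexGraph_neighborFinset_some (u : V) :
    (apexGraph G).neighborFinset (some u) = insert none ((G.neighborFinset u).map .some) := by
  ext (_ | w)
  · simpa using (apexGraph_adj_none_some G u).symm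
  · simp [apexGraph_adj_some_some]

theorem sum_apexGraph_neighborFinset_some (x : Sym2 (Option V) → ℝ) (u : V) :
    ∑ w ∈ (apexGraph G).neighborFinset (some u), x s(some u, w) =
      x s(none, some u) + ∑ w ∈ G.neighborFinset u, x s(some u, some w) := by
  rw [apexGraph_neighborFinset_some, sum_insert (by simp), sum_map, Sym2.eq_swap]
  rfl

theorem sum_apexGraph_filter_adjacent {u v : V} (huv : G.Adj u v) (x : Sym2 (Option V) → ℝ) :
    ∑ f ∈ (apexGraph G).edgeFinset.filter
        (fun f => f ≠ Sym2.map some s(u, v) ∧ ∃ z, z ∈ f ∧ z ∈ Sym2.map some s(u, v)), x f =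
      (x s(none, some u) + ∑ w ∈ G.neighborFinset u, x s(some u, some w)) +
        (x s(none, some v) + ∑ w ∈ G.neighborFinset v, x s(some v, some w))
        - 2 * x s(some u, some v) := by
  rw [Sym2.map_mk, sum_filter_adjacent_edgeFinset _ ((apexGraph_adj_some_some G).2 huv),
    sum_apexGraph_neighborFinset_some, sum_apexGraph_neighborFinset_some]

end Apex

open scoped Classical

section PGraph

variable {ℓ : ℕ}

theorem pGraph_neighborFinset_inl (i : Fin ℓ) :
    (pGraph ℓ).neighborFinset (inl i) = {inr 0, inr 1} := by
  ext v
  rw [mem_neighborFinset]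
  simp only [pGraph, fromRel_adj, mem_insert, mem_singleton]
  grind

theorem pGraph_neighborFinset_inr_zero :
    (pGraph ℓ).neighborFinset (inr 0) = univ.map .inl := by
  ext v
  rw [mem_neighborFinset]
  simp only [pGraph, fromRel_adj, mem_map, mem_univ, Function.Embedding.inl_apply, true_and]
  grind

theorem pGraph_neighborFinset_inr_one :
    (pGraph ℓ).neighborFinset (inr 1) = insert (inr 2) (univ.map .inl) := by
  ext v
  rw [mem_neighborFinset]
  simp only [pGraph, fromRel_adj, mem_insert, mem_map, mem_univ, Function.Embedding.inl_apply,
    true_and]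
  grind

theorem pGraph_adj_inl_inr_zero (i : Fin ℓ) : (pGraph ℓ).Adj (inl i) (inr 0) := by
  simp [pGraph]

theorem pGraph_adj_inl_inr_one (i : Fin ℓ) : (pGraph ℓ).Adj (inl i) (inr 1) := by
  simp [pGraph]

theorem sum_pGraph_edgeFinset (y : Sym2 (Fin ℓ ⊕ Fin 3) → ℝ) :
    ∑ e ∈ (pGraph ℓ).edgeFinset, y e =
      ∑ i, y s(inr 0, inl i) + (y s(inr 1, inr 2) + ∑ i, y s(inr 1, inl i)) := by
  rw [sum_edgeFinset_eq_add_of_forall_mem _ (a := inr 0) (b := inr 1) (by simp) (by simp [pGraph]),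
    pGraph_neighborFinset_inr_zero, pGraph_neighborFinset_inr_one, sum_insert (by simp),
    sum_map, sum_map]
  · rfl
  · intro e he
    induction e using Sym2.inductionOn with
    | hf a b =>
      simp only [mem_edgeSet, pGraph, fromRel_adj, Sym2.mem_iff] at he ⊢
      grind

theorem apexGraph_pGraph_pair_bound (x : Sym2 (Option (Fin ℓ ⊕ Fin 3)) → ℝ) (i : Fin ℓ)
    (h0 : ∑ f ∈ (apexGraph (pGraph ℓ)).edgeFinset.filter (fun f => f ≠ Sym2.map some s(inl i, inr 0)
      ∧ ∃ z, z ∈ f ∧ z ∈ Sym2.map some s(inl i, inr 0)), x f ≤ 2)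
    (h1 : ∑ f ∈ (apexGraph (pGraph ℓ)).edgeFinset.filter (fun f => f ≠ Sym2.map some s(inl i, inr 1)
      ∧ ∃ z, z ∈ f ∧ z ∈ Sym2.map some s(inl i, inr 1)), x f ≤ 2) :
    x s(none, some (inr 0)) + x s(none, some (inr 1)) + x s(some (inr 1), some (inr 2)) +
      ∑ j, x s(some (inr 0), some (inl j)) + ∑ j, x s(some (inr 1), some (inl j)) +
      2 * x s(none, some (inl i)) ≤ 4 := by
  rw [sum_apexGraph_filter_adjacent _ (pGraph_adj_inl_inr_zero i)] at h0
  rw [sum_apexGraph_filter_adjacent _ (pGraph_adj_inl_inr_one i)] at h1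
  simp only [pGraph_neighborFinset_inl, pGraph_neighborFinset_inr_zero,
    pGraph_neighborFinset_inr_one, sum_pair (show (inr 0 : Fin ℓ ⊕ Fin 3) ≠ inr 1 by simp),
    sum_insert (show inr 2 ∉ univ.map (.inl : Fin ℓ ↪ Fin ℓ ⊕ Fin 3) by simp), sum_map,
    Function.Embedding.inl_apply] at h0 h1
  linarith

end PGraph

open scoped Classical in
/-- Any `[0,1]`-valued edge assignment on the apex augmentation of `pGraph ℓ` satisfying
the base-model constraints has objective value at most `4 - 1/ℓ`. -/
theorem stmt8 (ℓ : ℕ) (hl : 3 ≤ ℓ)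
    (x : Sym2 (Option (Fin ℓ ⊕ Fin 3)) → ℝ)
    (hx01 : ∀ e ∈ (apexGraph (pGraph ℓ)).edgeSet, 0 ≤ x e ∧ x e ≤ 1)
    (ha : ∑ v : Fin ℓ ⊕ Fin 3, x s(none, some v) = 2)
    (hb : ∀ e ∈ (pGraph ℓ).edgeFinset,
      2 * x (Sym2.map some e) ≤
        (∑ f ∈ (apexGraph (pGraph ℓ)).edgeFinset.filter
          (fun f => f ≠ Sym2.map some e ∧ ∃ z, z ∈ f ∧ z ∈ Sym2.map some e), x f) ∧
      (∑ f ∈ (apexGraph (pGraph ℓ)).edgeFinset.filter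
          (fun f => f ≠ Sym2.map some e ∧ ∃ z, z ∈ f ∧ z ∈ Sym2.map some e), x f) ≤ 2) :
    ∑ e ∈ (pGraph ℓ).edgeFinset, x (Sym2.map some e) ≤ 4 - 1 / (ℓ : ℝ) := by
  set A := ∑ i : Fin ℓ, x s(some (inr 0), some (inl i))
  set B := ∑ i : Fin ℓ, x s(some (inr 1), some (inl i))
  set T := ∑ i : Fin ℓ, x s(none, some (inl i))
  set p := x s(none, some (inr 0))
  set q := x s(none, some (inr 1))
  set r := x s(none, some (inr 2))
  set c := x s(some (inr 1), some (inr 2))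
  have hpair (i : Fin ℓ) : p + q + c + A + B + 2 * x s(none, some (inl i)) ≤ 4 :=
    apexGraph_pGraph_pair_bound x i
      (hb s(inl i, inr 0) (mem_edgeFinset.2 (pGraph_adj_inl_inr_zero i))).2
      (hb s(inl i, inr 1) (mem_edgeFinset.2 (pGraph_adj_inl_inr_one i))).2
  have hsum : (ℓ : ℝ) * (p + q + c + A + B) + 2 * T ≤ 4 * ℓ := by
    have h := sum_le_sum fun i (_ : i ∈ univ) => hpair i
    simp only [sum_add_distrib, sum_const, card_univ, Fintype.card_fin, nsmul_eq_mul,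
      ← mul_sum] at h
    linarith
  have hT : T + (p + q + r) = 2 := by
    rw [Fintype.sum_sum_type, Fin.sum_univ_three] at ha
    linarith
  have hp := (hx01 s(none, some (inr 0)) (apexGraph_adj_none_some _ _)).1
  have hq := (hx01 s(none, some (inr 1)) (apexGraph_adj_none_some _ _)).1
  have hr := (hx01 s(none, some (inr 2)) (apexGraph_adj_none_some _ _)).2
  have hℓ : (3 : ℝ) ≤ ℓ := by exact_mod_cast hl
  rw [sum_pGraph_edgeFinset]
  simp only [Sym2.map_mk]
  rw [show (4 : ℝ) - 1 / ℓ = (4 * ℓ - 1) / ℓ by field_simp, le_div_iff₀ (by positivity)]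
  linarith [mul_nonneg (by linarith : (0 : ℝ) ≤ ℓ - 2) (add_nonneg hp hq)]
end

section
/- Let G be a graph, let S ⊆ E(G) be a set of edges such that every vertex incident to an edge of S has exactly two incident edges in S, and suppose additionally that for every edge e ∈ E(G) (selected or not), at most two edges of S are adjacent to e. If s is a vertex incident to exactly two edges of S and the edges of S form a single connected subgraph, then S is the edge set of an induced cycle of G except possibly for chords incident to s. -/
/-!
The edges of `S` span a graph in which every vertex has degree `0` or `2`, so the component of
`s` is a cycle through every `S`-edge reachable from `s`, and by connectedness it uses all of `S`.
A chord `ab` of this cycle would lie outside `S` and hence be adjacent to the two `S`-edges at `a`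
and the two at `b`, four edges in all, against the bound of two.
-/

open SimpleGraph

lemma mk_mem_of_ncard_adjacent_le_two {V : Type*} {S : Set (Sym2 V)} {a b : V} (hab : a ≠ b)
    (ha : {e ∈ S | a ∈ e}.ncard = 2) (hb : {e ∈ S | b ∈ e}.ncard = 2)
    (hadj : {f ∈ S | f ≠ s(a, b) ∧ ∃ x, x ∈ f ∧ x ∈ s(a, b)}.ncard ≤ 2) :
    s(a, b) ∈ S := by
  by_contra habS
  have hunion : {f ∈ S | f ≠ s(a, b) ∧ ∃ x, x ∈ f ∧ x ∈ s(a, b)} =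
      {f ∈ S | a ∈ f} ∪ {f ∈ S | b ∈ f} := by
    ext f
    simp only [Set.mem_ofPred_eq, Set.mem_union, Sym2.mem_iff]
    constructor
    · rintro ⟨hf, -, x, hx, rfl | rfl⟩ <;> simp_all
    · rintro (⟨hf, hx⟩ | ⟨hf, hx⟩) <;> exact ⟨hf, by rintro rfl; exact habS hf, by grind⟩
  have hdisj : Disjoint {f ∈ S | a ∈ f} {f ∈ S | b ∈ f} := by
    refine Set.disjoint_left.mpr fun f ⟨hf, haf⟩ ⟨_, hbf⟩ => habS ?_
    rwa [← (Sym2.mem_and_mem_iff hab).mp ⟨haf, hbf⟩]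
  rw [hunion, Set.ncard_union_eq hdisj (Set.finite_of_ncard_pos (by omega))
    (Set.finite_of_ncard_pos (by omega)), ha, hb] at hadj
  omega

namespace SimpleGraph

variable {V : Type*}

lemma ncard_neighborSet_fromEdgeSet {S : Set (Sym2 V)} (hS : ∀ e ∈ S, ¬ e.IsDiag) (v : V) :
    ((fromEdgeSet S).neighborSet v).ncard = {e ∈ S | v ∈ e}.ncard := by
  classical
  have hinc : (fromEdgeSet S).incidenceSet v = {e ∈ S | v ∈ e} := by
    ext e
    simp only [incidenceSet, edgeSet_fromEdgeSet, Set.mem_ofPred_eq, Set.mem_sdiff,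
      Sym2.mem_diagSet]
    exact ⟨fun ⟨⟨he, _⟩, hv⟩ => ⟨he, hv⟩, fun ⟨he, hv⟩ => ⟨⟨he, hS e he⟩, hv⟩⟩
  rw [← hinc, ← Nat.card_coe_set_eq, ← Nat.card_coe_set_eq,
    ← Nat.card_congr ((fromEdgeSet S).incidenceSetEquivNeighborSet v)]

lemma isCycles_fromEdgeSet {S : Set (Sym2 V)} (hS : ∀ e ∈ S, ¬ e.IsDiag)
    (hdeg : ∀ v : V, (∃ e ∈ S, v ∈ e) → {e ∈ S | v ∈ e}.ncard = 2) :
    (fromEdgeSet S).IsCycles := by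
  rintro v ⟨w, hw⟩
  rw [ncard_neighborSet_fromEdgeSet hS]
  exact hdeg v ⟨s(v, w), hw.1, Sym2.mem_mk_left _ _⟩

lemma IsCycles.exists_isCycle_mem_edges_of_reachable [Finite V] {H : SimpleGraph V}
    (h : H.IsCycles) {v : V} (hv : (H.neighborSet v).Nonempty) :
    ∃ p : H.Walk v v, p.IsCycle ∧
      ∀ a b, H.Reachable v a → H.Adj a b → s(a, b) ∈ p.edges := by
  classical
  have := Fintype.ofFinite V
  obtain ⟨p, hp, hverts⟩ :=
    h.exists_cycle_toSubgraph_verts_eq_connectedComponentSupp (c := H.connectedComponentMk v)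
      rfl hv
  refine ⟨p, hp, fun a b hva hab => p.mem_edges_toSubgraph.mp ?_⟩
  have ha : a ∈ p.toSubgraph.verts := by
    rw [hverts]
    exact (ConnectedComponent.eq.mpr hva).symm
  exact (hp.adj_toSubgraph_iff_of_isCycles h ha b).mpr hab

end SimpleGraph

/-- The subgraph of `G` with edge set `S` and vertices those incident to an edge of `S`. -/
def edgeSub {V : Type*} (G : SimpleGraph V) (S : Set (Sym2 V)) (hS : S ⊆ G.edgeSet) :
    G.Subgraph where
  verts := {v | ∃ e ∈ S, v ∈ e}
  Adj a b := s(a, b) ∈ S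
  adj_sub h := (G.mem_edgeSet).mp (hS h)
  edge_vert h := ⟨_, h, Sym2.mem_mk_left _ _⟩
  symm := ⟨fun a b h => by simpa only [Sym2.eq_swap] using h⟩

lemma reachable_fromEdgeSet_of_edgeSub_connected {V : Type*} {G : SimpleGraph V}
    {S : Set (Sym2 V)} {hS : S ⊆ G.edgeSet} (hconn : (edgeSub G S hS).Connected)
    {u v : V} (hu : ∃ e ∈ S, u ∈ e) (hv : ∃ e ∈ S, v ∈ e) : (fromEdgeSet S).Reachable u v :=
  let toFromEdgeSet : (edgeSub G S hS).coe →g fromEdgeSet S :=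
    { toFun := Subtype.val
      map_rel' := fun h => ⟨h, (G.mem_edgeSet.mp (hS h)).ne⟩ }
  (hconn ⟨u, hu⟩ ⟨v, hv⟩).map toFromEdgeSet

/-- If every vertex touched by `S` has exactly two incident edges in `S`, every edge of
`G` is adjacent to at most two edges of `S`, the vertex `s` is incident to exactly two
edges of `S`, and `S` forms a single connected subgraph, then `S` is the edge set of a
cycle all of whose chords are incident to `s`. -/
theorem stmt15 {V : Type*} [Fintype V] (G : SimpleGraph V)
    (S : Set (Sym2 V)) (hS : S ⊆ G.edgeSet)
    (hdeg : ∀ v : V, (∃ e ∈ S, v ∈ e) → {e ∈ S | v ∈ e}.ncard = 2)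
    (hadj : ∀ e ∈ G.edgeSet, {f ∈ S | f ≠ e ∧ ∃ x, x ∈ f ∧ x ∈ e}.ncard ≤ 2)
    (s : V) (hs : {e ∈ S | s ∈ e}.ncard = 2)
    (hconn : (edgeSub G S hS).Connected) :
    ∃ c : G.Walk s s, c.IsCycle ∧ (∀ e, e ∈ c.edges ↔ e ∈ S) ∧
      ∀ a b : V, G.Adj a b → a ∈ c.support → b ∈ c.support →
        ¬ c.toSubgraph.Adj a b → (a = s ∨ b = s) := by
  have hSdiag : ∀ e ∈ S, ¬ e.IsDiag := fun e he => G.not_isDiag_of_mem_edgeSet (hS he)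
  have hs_nonempty : ((fromEdgeSet S).neighborSet s).Nonempty :=
    Set.nonempty_of_ncard_ne_zero (by rw [ncard_neighborSet_fromEdgeSet hSdiag, hs]; omega)
  obtain ⟨p, hp, hp_reachable⟩ :=
    (isCycles_fromEdgeSet hSdiag hdeg).exists_isCycle_mem_edges_of_reachable hs_nonempty
  have hp_edges : ∀ e, e ∈ p.edges ↔ e ∈ S := by
    refine fun e => ⟨fun he => (edgeSet_fromEdgeSet S ▸ p.edges_subset_edgeSet he).1, ?_⟩
    induction e with
    | h a b =>
      intro he
      refine hp_reachable a b ?_ ⟨he, G.ne_of_adj (hS he)⟩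
      exact reachable_fromEdgeSet_of_edgeSub_connected hconn
        ⟨_, hs_nonempty.some_mem.1, Sym2.mem_mk_left _ _⟩ ⟨_, he, Sym2.mem_mk_left _ _⟩
  have hp_support : ∀ a ∈ p.support, {e ∈ S | a ∈ e}.ncard = 2 := fun a ha => by
    obtain ⟨e, he, hae⟩ := (Walk.mem_support_iff_exists_mem_edges_of_not_nil hp.not_nil).mp ha
    exact hdeg a ⟨e, (hp_edges e).mp he, hae⟩
  have hle : fromEdgeSet S ≤ G := (G.fromEdgeSet_le).mpr fun e he => hS he.1
  refine ⟨p.mapLe hle, hp.mapLe hle, by rwa [Walk.edges_mapLe_eq_edges], ?_⟩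
  intro a b hab ha hb hchord
  rw [Walk.support_mapLe_eq_support] at ha hb
  have habS : s(a, b) ∈ S := mk_mem_of_ncard_adjacent_le_two hab.ne (hp_support a ha)
    (hp_support b hb) (hadj _ (G.mem_edgeSet.mpr hab))
  exact absurd (Walk.adj_toSubgraph_mapLe hle |>.mpr
    (p.mem_edges_toSubgraph.mpr ((hp_edges _).mpr habS))) hchord
end
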